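/- For every k ≥ 3, the minimal polynomial over ℚ of the real number 4·sin²(π/2^k) equals (l (2^{k−2})).comp (2 − X), regarded as an element of ℚ[X]. -/

import Mathlib

open Polynomial Real

/-!
Since `2 - 4 sin² θ = 2 cos 2θ` and `l n (2 cos φ) = 2 cos (n φ)` (`l n` is the normalized
Chebyshev polynomial `Chebyshev.C ℤ n`), the number `4 sin² (π / 2 ^ k)` is a root of
`l N (2 - X)` with `N = 2 ^ (k - 2)`, because `N · 2π / 2 ^ k = π / 2`. For even `N` this
polynomial is monic of degree `N`, and it is Eisenstein at `2`: modulo 2 the composition law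
`l (m n) = l m ∘ l n` and `l 2 = X ^ 2 - 2` give `l N ≡ X ^ N`, while its constant term is
`l N 2 = 2`. By Gauss's lemma it is irreducible over `ℚ`, hence the minimal polynomial.
-/

/-- Lucas-type polynomials: `l 0 = 2`, `l 1 = X`, `l n = X * l (n-1) - l (n-2)`. -/
noncomputable def lucPoly : ℕ → ℤ[X]
  | 0 => 2
  | 1 => X
  | (n + 2) => X * lucPoly (n + 1) - lucPoly n

namespace Polynomial

theorem Monic.irreducible_of_map_eq_X_pow {R S : Type*} [CommRing R] [IsDomain R] [CommRing S]
    [IsDomain S] (φ : R →+* S) {f : R[X]} (hf : f.Monic) {n : ℕ} (hn : 0 < n)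
    (hmap : f.map φ = X ^ n) (h0 : f.coeff 0 ∉ RingHom.ker φ ^ 2) : Irreducible f := by
  have hdeg : f.natDegree = n := by rw [← hf.natDegree_map φ, hmap, natDegree_X_pow]
  have hmem {i : ℕ} (hi : i < f.natDegree) : f.coeff i ∈ RingHom.ker φ := by
    rw [RingHom.mem_ker, ← coeff_map, hmap, coeff_X_pow, if_neg (by omega)]
  exact (hf.isEisensteinAt_of_mem_of_notMem (RingHom.ker_ne_top φ) hmem h0).irreducible
    (RingHom.ker_isPrime φ) hf.isPrimitive (hdeg ▸ hn)

theorem Monic.comp_C_sub_X {R : Type*} [CommRing R] {p : R[X]} (hp : p.Monic)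
    (he : Even p.natDegree) (a : R) : (p.comp (C a - X)).Monic := by
  have hneg := hp.neg_one_pow_natDegree_mul_comp_neg_X
  rw [he.neg_one_pow, one_mul] at hneg
  have hcomp : (C a - X : R[X]) = (-X).comp (X - C a) := by simp
  rw [hcomp, ← comp_assoc]
  exact hneg.comp_X_sub_C a

namespace Chebyshev

variable {R : Type*} [CommRing R]

theorem natDegree_C_natCast_le : ∀ n : ℕ, (C R n).natDegree ≤ n
  | 0 => by simp [C_zero]
  | 1 => by simpa [C_one] using natDegree_X_le
  | n + 2 => by
    push_cast
    rw [C_add_two]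
    refine (natDegree_sub_le _ _).trans (max_le ?_ ?_)
    · have := natDegree_C_natCast_le (n + 1)
      push_cast at this
      exact natDegree_mul_le.trans (by linarith [natDegree_X_le (R := R)])
    · exact (natDegree_C_natCast_le n).trans (by omega)

theorem coeff_C_natCast_self : ∀ {n : ℕ}, n ≠ 0 → (C R n).coeff n = 1
  | 1, _ => by simp [C_one]
  | n + 2, _ => by
    push_cast
    rw [C_add_two, coeff_sub, coeff_X_mul, coeff_eq_zero_of_natDegree_lt
      ((natDegree_C_natCast_le n).trans_lt (by omega)), sub_zero]
    exact_mod_cast coeff_C_natCast_self (n := n + 1) (by omega)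

theorem monic_C_natCast {n : ℕ} (hn : n ≠ 0) : (C R n).Monic :=
  monic_of_natDegree_le_of_coeff_eq_one n (natDegree_C_natCast_le n) (coeff_C_natCast_self hn)

theorem natDegree_C_natCast [Nontrivial R] (n : ℕ) : (C R n).natDegree = n := by
  rcases eq_or_ne n 0 with rfl | hn
  · exact Nat.le_zero.mp (natDegree_C_natCast_le 0)
  · exact natDegree_eq_of_le_of_coeff_ne_zero (natDegree_C_natCast_le n)
      (by rw [coeff_C_natCast_self hn]; exact one_ne_zero)

theorem C_two_pow_of_charP_two [CharP R 2] (m : ℕ) : C R (2 ^ m) = X ^ 2 ^ m := by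
  have hC2 : C R 2 = X ^ 2 := by rw [C_two, CharTwo.two_eq_zero (R := R[X]), sub_zero]
  induction m with
  | zero => simp [C_one]
  | succ m ih => rw [pow_succ, C_mul, ih, hC2, pow_comp, X_comp, ← pow_mul, pow_succ' 2 m]

theorem C_two_pow_comp_two_sub_X [CharP R 2] (m : ℕ) : (C R (2 ^ m)).comp (2 - X) = X ^ 2 ^ m := by
  rw [C_two_pow_of_charP_two, pow_comp, X_comp, CharTwo.two_eq_zero (R := R[X]), zero_sub,
    CharTwo.neg_eq]

theorem monic_C_two_pow_comp_two_sub_X {m : ℕ} (hm : m ≠ 0) :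
    ((C R (2 ^ m)).comp (2 - X)).Monic := by
  nontriviality R
  have hmonic := monic_C_natCast (R := R) (Nat.two_pow_pos m).ne'
  have heven : Even (C R (2 ^ m : ℕ)).natDegree := by
    rw [natDegree_C_natCast]
    exact (Nat.even_pow' hm).mpr even_two
  simpa [map_ofNat Polynomial.C 2] using hmonic.comp_C_sub_X heven 2

theorem irreducible_C_two_pow_comp_two_sub_X {m : ℕ} (hm : m ≠ 0) :
    Irreducible ((C ℤ (2 ^ m)).comp (2 - X)) := by
  refine (monic_C_two_pow_comp_two_sub_X hm).irreducible_of_map_eq_X_pow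
    (Int.castRingHom (ZMod 2)) (Nat.two_pow_pos m) ?_ ?_
  · rw [Polynomial.map_comp, map_C, Polynomial.map_sub, Polynomial.map_ofNat, map_X]
    exact C_two_pow_comp_two_sub_X m
  · rw [ZMod.ker_intCastRingHom, Ideal.span_singleton_pow, Ideal.mem_span_singleton,
      coeff_zero_eq_eval_zero, eval_comp, eval_sub, eval_ofNat, eval_X, sub_zero, C_eval_two]
    norm_num

theorem C_comp_two_sub_X_eval_four_mul_sin_sq (n : ℤ) (θ : ℝ) :
    ((C ℝ n).comp (2 - X)).eval (4 * sin θ ^ 2) = 2 * cos (n * (2 * θ)) := by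
  have h : 2 - 4 * sin θ ^ 2 = 2 * cos (2 * θ) := by rw [cos_two_mul, cos_sq']; ring
  rw [eval_comp, eval_sub, eval_ofNat, eval_X, h, C_two_mul_real_cos]

end Chebyshev

end Polynomial

theorem lucPoly_eq_chebyshev_C : ∀ n : ℕ, lucPoly n = Chebyshev.C ℤ n
  | 0 => by simp [lucPoly, Chebyshev.C_zero]
  | 1 => by simp [lucPoly, Chebyshev.C_one]
  | n + 2 => by
    rw [lucPoly, lucPoly_eq_chebyshev_C (n + 1), lucPoly_eq_chebyshev_C n]
    push_cast
    rw [Chebyshev.C_add_two]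

theorem minpoly_four_sin_sq_pow_two (k : ℕ) (hk : 3 ≤ k) :
    minpoly ℚ (4 * Real.sin (Real.pi / 2 ^ k) ^ 2) =
      ((lucPoly (2 ^ (k - 2))).comp (2 - X)).map (Int.castRingHom ℚ) := by
  obtain ⟨m, rfl⟩ : ∃ m, k = m + 2 := ⟨k - 2, by omega⟩
  have hm : m ≠ 0 := by omega
  rw [Nat.add_sub_cancel, lucPoly_eq_chebyshev_C, Nat.cast_pow, Nat.cast_ofNat]
  have hmonic := Chebyshev.monic_C_two_pow_comp_two_sub_X (R := ℤ) hm
  refine (minpoly.eq_of_irreducible_of_monic ?_ ?_ (hmonic.map _)).symm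
  · exact (IsPrimitive.Int.irreducible_iff_irreducible_map_cast hmonic.isPrimitive).mp
      (Chebyshev.irreducible_C_two_pow_comp_two_sub_X hm)
  · have hangle : ((2 ^ m : ℤ) : ℝ) * (2 * (π / 2 ^ (m + 2))) = π / 2 := by
      push_cast
      field_simp
      ring
    rw [← algebraMap_int_eq, aeval_map_algebraMap, aeval_def, eval₂_eq_eval_map,
      Polynomial.map_comp, Chebyshev.map_C, Polynomial.map_sub, Polynomial.map_ofNat, map_X,
      Chebyshev.C_comp_two_sub_X_eval_four_mul_sin_sq, hangle, cos_pi_div_two, mul_zero]
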